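/- For any u, v ∈ ℝ^n and symmetric positive semidefinite A, B, inf_w (‖u-w‖_A^2 + ‖v-w‖_B^2) = (u-v)^T A(A+B)^†B (u-v). -/

import Mathlib

open Matrix

/-- The four Penrose conditions characterizing the Moore–Penrose pseudoinverse. -/
def IsMoorePenrose {n : ℕ} (A P : Matrix (Fin n) (Fin n) ℝ) : Prop :=
  A * P * A = A ∧ P * A * P = P ∧ (A * P)ᵀ = A * P ∧ (P * A)ᵀ = P * A

/-!
Since `A` and `B` are positive semidefinite, `ker (A + B) ⊆ ker B`, so `range B ⊆ range (A + B)`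
and `(A + B) P B = B`. With `S = A + B`, `d = u - v`, `x = u - w` and `m = P B d` this lets one
complete the square:
`xᵀ A x + (x - d)ᵀ B (x - d) = dᵀ A P B d + (x - m)ᵀ S (x - m)`.
The last term is nonnegative and vanishes at `x = m`.
-/

open scoped ComplexOrder

namespace Matrix

section Kernel

variable {𝕜 ι κ : Type*} [RCLike 𝕜] [Fintype ι] {A B : Matrix ι ι 𝕜}

theorem PosSemidef.mulVec_eq_zero_of_add_mulVec_eq_zero (hA : A.PosSemidef) (hB : B.PosSemidef)
    {x : ι → 𝕜} (hx : (A + B) *ᵥ x = 0) : B *ᵥ x = 0 := by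
  have hsum : star x ⬝ᵥ A *ᵥ x + star x ⬝ᵥ B *ᵥ x = 0 := by
    rw [← dotProduct_add, ← add_mulVec, hx, dotProduct_zero]
  rw [← hB.dotProduct_mulVec_zero_iff]
  exact ((add_eq_zero_iff_of_nonneg (hA.dotProduct_mulVec_nonneg x)
    (hB.dotProduct_mulVec_nonneg x)).mp hsum).2

theorem PosSemidef.mul_eq_zero_of_add_mul_eq_zero [Fintype κ] (hA : A.PosSemidef)
    (hB : B.PosSemidef) {M : Matrix ι κ 𝕜} (hM : (A + B) * M = 0) : B * M = 0 := by
  classical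
  refine ext_of_mulVec_single fun j => ?_
  rw [zero_mulVec, ← mulVec_mulVec]
  exact hA.mulVec_eq_zero_of_add_mulVec_eq_zero hB (by rw [mulVec_mulVec, hM, zero_mulVec])

end Kernel

section Symm

variable {R ι : Type*} [CommRing R] [Fintype ι]

theorem IsSymm.dotProduct_mulVec_comm {M : Matrix ι ι R} (hM : M.IsSymm) (x y : ι → R) :
    x ⬝ᵥ M *ᵥ y = y ⬝ᵥ M *ᵥ x := by
  rw [dotProduct_mulVec, ← mulVec_transpose, hM.eq, dotProduct_comm]

theorem IsSymm.dotProduct_mulVec_sub_sub {M : Matrix ι ι R} (hM : M.IsSymm) (x y : ι → R) :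
    (x - y) ⬝ᵥ M *ᵥ (x - y) = x ⬝ᵥ M *ᵥ x - 2 * (x ⬝ᵥ M *ᵥ y) + y ⬝ᵥ M *ᵥ y := by
  rw [mulVec_sub, dotProduct_sub, sub_dotProduct, sub_dotProduct, hM.dotProduct_mulVec_comm y x]
  ring

theorem IsSymm.dotProduct_mulVec_add_sub_eq {A B P : Matrix ι ι R} (hA : A.IsSymm)
    (hB : B.IsSymm) (hPB : (A + B) * P * B = B) (x d : ι → R) :
    x ⬝ᵥ A *ᵥ x + (x - d) ⬝ᵥ B *ᵥ (x - d) =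
      d ⬝ᵥ (A * P * B) *ᵥ d + (x - (P * B) *ᵥ d) ⬝ᵥ (A + B) *ᵥ (x - (P * B) *ᵥ d) := by
  set m := (P * B) *ᵥ d
  have hSm : (A + B) *ᵥ m = B *ᵥ d := by rw [mulVec_mulVec, ← mul_assoc, hPB]
  have hc : d ⬝ᵥ (A * P * B) *ᵥ d + m ⬝ᵥ B *ᵥ d = d ⬝ᵥ B *ᵥ d := by
    rw [hB.dotProduct_mulVec_comm m d, mulVec_mulVec, ← mul_assoc, ← dotProduct_add,
      ← add_mulVec, ← add_mul, ← add_mul, hPB]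
  rw [hB.dotProduct_mulVec_sub_sub, (hA.add hB).dotProduct_mulVec_sub_sub, hSm, add_mulVec,
    dotProduct_add]
  linear_combination -hc

end Symm

end Matrix

theorem IsMoorePenrose.add_mul_mul_right_eq {n : ℕ} {A B P : Matrix (Fin n) (Fin n) ℝ}
    (hA : A.PosSemidef) (hB : B.PosSemidef) (hP : IsMoorePenrose (A + B) P) :
    (A + B) * P * B = B := by
  obtain ⟨hSPS, -, hSP, -⟩ := hP
  have hBs : Bᵀ = B := (isHermitian_iff_isSymm.mp hB.1).eq
  have hSs : (A + B)ᵀ = A + B := ((isHermitian_iff_isSymm.mp hA.1).add hBs).eq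
  have hSSP : (A + B) * ((A + B) * P) = A + B := by
    simpa only [transpose_mul, hSP, hSs] using congrArg transpose hSPS
  have hker : B * (1 - (A + B) * P) = 0 :=
    hA.mul_eq_zero_of_add_mul_eq_zero hB (by rw [mul_sub, mul_one, hSSP, sub_self])
  have := congrArg transpose hker
  rw [transpose_mul, transpose_sub, transpose_one, hSP, hBs, transpose_zero, sub_mul, one_mul,
    sub_eq_zero] at this
  exact this.symm

theorem inf_eq_harmonic_quadform {n : ℕ} (A B P : Matrix (Fin n) (Fin n) ℝ)
    (hA : A.PosSemidef) (hB : B.PosSemidef)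
    (hP : IsMoorePenrose (A + B) P) (u v : Fin n → ℝ) :
    (⨅ w : Fin n → ℝ,
        (u - w) ⬝ᵥ A.mulVec (u - w) + (v - w) ⬝ᵥ B.mulVec (v - w)) =
      (u - v) ⬝ᵥ (A * P * B).mulVec (u - v) := by
  set m := (P * B) *ᵥ (u - v)
  have hsq (w : Fin n → ℝ) :
      (u - w) ⬝ᵥ A *ᵥ (u - w) + (v - w) ⬝ᵥ B *ᵥ (v - w) =
        (u - v) ⬝ᵥ (A * P * B) *ᵥ (u - v) + (u - w - m) ⬝ᵥ (A + B) *ᵥ (u - w - m) := by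
    rw [show v - w = (u - w) - (u - v) by abel]
    exact (isHermitian_iff_isSymm.mp hA.1).dotProduct_mulVec_add_sub_eq
      (isHermitian_iff_isSymm.mp hB.1) (hP.add_mul_mul_right_eq hA hB) _ _
  simp_rw [hsq]
  refine IsLeast.csInf_eq ⟨⟨u - m, by simp⟩, ?_⟩
  rintro _ ⟨w, rfl⟩
  simpa using (hA.add hB).dotProduct_mulVec_nonneg (u - w - m)
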